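/- Let n ≥ 2, let f : [0,1] → ℝ be continuously differentiable, and let x ∈ [0,1]. Then the derivative of the polynomial x ↦ U_n(f;x) satisfies |(U_n f)′(x)| ≤ ‖f′‖_∞. -/

import Mathlib

open scoped BigOperators
open Set Filter MeasureTheory

/-- Bernstein fundamental function `p_{n,k}` (vanishes for `k > n` since `choose = 0`). -/
noncomputable def bp (n k : ℕ) (x : ℝ) : ℝ :=
  (n.choose k : ℝ) * x ^ k * (1 - x) ^ (n - k)

/-- Bernstein fundamental function with integer index, vanishing for negative `k`. -/
noncomputable def bpz (n : ℕ) (k : ℤ) (x : ℝ) : ℝ :=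
  if 0 ≤ k then bp n k.toNat x else 0

/-- The classical Bernstein operator `B_n`. -/
noncomputable def Bern (n : ℕ) (f : ℝ → ℝ) (x : ℝ) : ℝ :=
  ∑ k ∈ Finset.range (n + 1), bp n k x * f (k / n)

/-- Modified fundamental function `p_{n,k}^{M,1}` with `a(x,n) = a1*x + a0`. -/
noncomputable def bpM1 (a0 a1 : ℝ) (n k : ℕ) (x : ℝ) : ℝ :=
  (a1 * x + a0) * bp (n - 1) k x + (a1 * (1 - x) + a0) * bpz (n - 1) ((k : ℤ) - 1) x

/-- The modified Bernstein operator `B_n^{M,1}`. -/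
noncomputable def BernM1 (a0 a1 : ℝ) (n : ℕ) (f : ℝ → ℝ) (x : ℝ) : ℝ :=
  ∑ k ∈ Finset.range (n + 1), bpM1 a0 a1 n k x * f (k / n)

/-- Second modified fundamental function `p_{n,k}^{M,2}`. -/
noncomputable def bpM2 (n k : ℕ) (x : ℝ) : ℝ :=
  ((n : ℝ) / 2 * x ^ 2 + (-1 - (n : ℝ) / 2) * x + 1) * bp (n - 2) k x
    + (n : ℝ) * x * (1 - x) * bpz (n - 2) ((k : ℤ) - 1) x
    + ((n : ℝ) / 2 * x ^ 2 + (-(n : ℝ) / 2 + 1) * x) * bpz (n - 2) ((k : ℤ) - 2) x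

/-- The second modified Bernstein operator `B_n^{M,2}`. -/
noncomputable def BernM2 (n : ℕ) (f : ℝ → ℝ) (x : ℝ) : ℝ :=
  ∑ k ∈ Finset.range (n + 1), bpM2 n k x * f (k / n)

/-- The Kantorovich operator `K_n`. -/
noncomputable def Kan (n : ℕ) (f : ℝ → ℝ) (x : ℝ) : ℝ :=
  ((n : ℝ) + 1) * ∑ k ∈ Finset.range (n + 1),
    bp n k x * ∫ t in ((k : ℝ) / (n + 1))..(((k : ℝ) + 1) / (n + 1)), f t

/-- The modified Kantorovich operator `K_n^{M,1}`. -/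
noncomputable def KanM1 (a0 a1 : ℝ) (n : ℕ) (f : ℝ → ℝ) (x : ℝ) : ℝ :=
  ((n : ℝ) + 1) * ∑ k ∈ Finset.range (n + 1),
    bpM1 a0 a1 n k x * ∫ t in ((k : ℝ) / (n + 1))..(((k : ℝ) + 1) / (n + 1)), f t

/-- The Durrmeyer operator `D_n`. -/
noncomputable def Dur (n : ℕ) (f : ℝ → ℝ) (x : ℝ) : ℝ :=
  ((n : ℝ) + 1) * ∑ k ∈ Finset.range (n + 1),
    bp n k x * ∫ t in (0:ℝ)..1, bp n k t * f t

/-- The modified Durrmeyer operator `D_n^{M,1}`. -/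
noncomputable def DurM1 (a0 a1 : ℝ) (n : ℕ) (f : ℝ → ℝ) (x : ℝ) : ℝ :=
  ((n : ℝ) + 1) * ∑ k ∈ Finset.range (n + 1),
    bpM1 a0 a1 n k x * ∫ t in (0:ℝ)..1, bp n k t * f t

/-- The genuine Bernstein–Durrmeyer operator `U_n`. -/
noncomputable def Gen (n : ℕ) (f : ℝ → ℝ) (x : ℝ) : ℝ :=
  (1 - x) ^ n * f 0 + x ^ n * f 1 +
    ((n : ℝ) - 1) * ∑ k ∈ Finset.Icc 1 (n - 1),
      bp n k x * ∫ t in (0:ℝ)..1, bp (n - 2) (k - 1) t * f t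

/-- The modified genuine Bernstein–Durrmeyer operator `U_n^{M,1}`. -/
noncomputable def GenM1 (a0 a1 : ℝ) (n : ℕ) (f : ℝ → ℝ) (x : ℝ) : ℝ :=
  (a1 * x + a0) * (1 - x) ^ (n - 1) * f 0 + (a1 * (1 - x) + a0) * x ^ (n - 1) * f 1 +
    ((n : ℝ) - 1) * ∑ k ∈ Finset.Icc 1 (n - 1),
      bpM1 a0 a1 n k x * ∫ t in (0:ℝ)..1, bp (n - 2) (k - 1) t * f t

/-- First modulus of continuity on `[0,1]`. -/
noncomputable def omega1 (f : ℝ → ℝ) (δ : ℝ) : ℝ :=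
  sSup {y | ∃ s t : ℝ, s ∈ Icc (0:ℝ) 1 ∧ t ∈ Icc (0:ℝ) 1 ∧ |s - t| ≤ δ ∧ y = |f s - f t|}

/-- Second modulus of smoothness on `[0,1]`. -/
noncomputable def omega2 (f : ℝ → ℝ) (δ : ℝ) : ℝ :=
  sSup {y | ∃ t h : ℝ, 0 < h ∧ h ≤ δ ∧ t - h ∈ Icc (0:ℝ) 1 ∧ t + h ∈ Icc (0:ℝ) 1 ∧
    y = |f (t + h) - 2 * f t + f (t - h)|}

/-- Sup norm on `[0,1]`. -/
noncomputable def supNorm (g : ℝ → ℝ) : ℝ :=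
  sSup {y | ∃ t ∈ Icc (0:ℝ) 1, y = |g t|}

/-!
Write `U_{m+2} f = ∑ₖ aₖ p_{m+2,k}` with `a₀ = f 0`, `a_{m+2} = f 1` and
`aₖ = (m+1) ∫ p_{m,k-1} f` otherwise (`genCoeff`). Its derivative is
`(m+2) ∑ₖ p_{m+1,k}(x) (a_{k+1} - aₖ)`, and integrating by parts against `p_{m+1,k}` turns each
difference into `∫ p_{m+1,k} f'`. Applied to constant `f`, the same identity gives
`∫ p_{m+1,k} = 1/(m+2)`. As the `p_{m+1,k}(x)` form a partition of unity on `[0,1]`, the derivative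
is thus a convex combination of the numbers `(m+2) ∫ p_{m+1,k} f'`, each of modulus at most
`‖f'‖_∞`.
-/

open Polynomial intervalIntegral

lemma bp_eq_eval (n k : ℕ) (x : ℝ) : bp n k x = (bernsteinPolynomial ℝ n k).eval x := by
  simp [bp, bernsteinPolynomial]

lemma continuous_bp (n k : ℕ) : Continuous (bp n k) := by
  unfold bp; fun_prop

lemma bp_nonneg (n k : ℕ) {x : ℝ} (hx : x ∈ Icc (0:ℝ) 1) : 0 ≤ bp n k x := by
  have hx₀ : 0 ≤ x := hx.1
  have hx₁ : 0 ≤ 1 - x := sub_nonneg.2 hx.2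
  unfold bp
  positivity

lemma sum_bp (n : ℕ) (x : ℝ) : ∑ k ∈ Finset.range (n + 1), bp n k x = 1 := by
  simp only [bp_eq_eval, ← eval_finsetSum, bernsteinPolynomial.sum, eval_one]

lemma bp_eq_zero_of_lt {n k : ℕ} (h : n < k) (x : ℝ) : bp n k x = 0 := by
  simp [bp_eq_eval, bernsteinPolynomial.eq_zero_of_lt ℝ h]

lemma bp_zero_index (n : ℕ) (x : ℝ) : bp n 0 x = (1 - x) ^ n := by
  simp [bp]

lemma bp_self_index (n : ℕ) (x : ℝ) : bp n n x = x ^ n := by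
  simp [bp]

lemma bp_at_zero (n k : ℕ) : bp n k 0 = if k = 0 then 1 else 0 := by
  rw [bp_eq_eval, bernsteinPolynomial.eval_at_0]

lemma bp_at_one (n k : ℕ) : bp n k 1 = if k = n then 1 else 0 := by
  rw [bp_eq_eval, bernsteinPolynomial.eval_at_1]

lemma hasDerivAt_bp (n k : ℕ) (x : ℝ) :
    HasDerivAt (bp n k) ((derivative (bernsteinPolynomial ℝ n k)).eval x) x := by
  rw [show bp n k = fun y => (bernsteinPolynomial ℝ n k).eval y from funext (bp_eq_eval n k)]
  exact Polynomial.hasDerivAt _ x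

lemma hasDerivAt_bp_zero (m : ℕ) (x : ℝ) :
    HasDerivAt (bp (m + 1) 0) (-((m : ℝ) + 1) * bp m 0 x) x :=
  (hasDerivAt_bp _ _ x).congr_deriv (by simp [bernsteinPolynomial.derivative_zero, bp_eq_eval])

lemma hasDerivAt_bp_succ (m k : ℕ) (x : ℝ) :
    HasDerivAt (bp (m + 1) (k + 1)) (((m : ℝ) + 1) * (bp m k x - bp m (k + 1) x)) x :=
  (hasDerivAt_bp _ _ x).congr_deriv (by simp [bernsteinPolynomial.derivative_succ, bp_eq_eval])

lemma hasDerivAt_sum_bp_mul (N : ℕ) (a : ℕ → ℝ) (x : ℝ) :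
    HasDerivAt (fun y => ∑ k ∈ Finset.range (N + 2), bp (N + 1) k y * a k)
      (((N : ℝ) + 1) * ∑ k ∈ Finset.range (N + 1), bp N k x * (a (k + 1) - a k)) x := by
  have hterms := HasDerivAt.fun_sum (u := Finset.range (N + 2))
    (A := fun k y => bp (N + 1) k y * a k) (x := x)
    (A' := fun k => (if k = 0 then -((N : ℝ) + 1) * bp N 0 x
      else ((N : ℝ) + 1) * (bp N (k - 1) x - bp N k x)) * a k)
    (fun k _ => by
      rcases k with _ | k
      · simpa using (hasDerivAt_bp_zero N x).mul_const (a 0)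
      · simpa using (hasDerivAt_bp_succ N k x).mul_const (a (k + 1)))
  refine hterms.congr_deriv ?_
  have hshift : ∑ k ∈ Finset.range (N + 1), bp N (k + 1) x * a (k + 1)
      = ∑ k ∈ Finset.range (N + 1), bp N k x * a k - bp N 0 x * a 0 := by
    have h := Finset.sum_range_succ' (fun k => bp N k x * a k) (N + 1)
    rw [Finset.sum_range_succ, bp_eq_zero_of_lt (Nat.lt_succ_self N)] at h
    linarith
  rw [Finset.sum_range_succ' _ (N + 1)]
  simp only [Nat.succ_ne_zero, if_false, if_true, Nat.add_sub_cancel]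
  simp only [mul_sub, sub_mul, Finset.sum_sub_distrib, ← Finset.mul_sum, mul_assoc]
  rw [hshift]
  ring

lemma integral_mul_deriv_eq_deriv_mul_Icc {g g' f f' : ℝ → ℝ} (hg : ∀ t, HasDerivAt g (g' t) t)
    (hg' : Continuous g') (hf : ∀ t ∈ Icc (0:ℝ) 1, HasDerivWithinAt f (f' t) (Icc 0 1) t)
    (hf' : ContinuousOn f' (Icc 0 1)) :
    ∫ t in (0:ℝ)..1, g t * f' t = g 1 * f 1 - g 0 * f 0 - ∫ t in (0:ℝ)..1, g' t * f t := by
  rw [← uIcc_of_le zero_le_one] at hf hf'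
  exact integral_mul_deriv_eq_deriv_mul_of_hasDerivWithinAt (fun t _ => (hg t).hasDerivWithinAt)
    hf (hg'.intervalIntegrable 0 1) hf'.intervalIntegrable

noncomputable def genCoeff (m : ℕ) (f : ℝ → ℝ) (k : ℕ) : ℝ :=
  if k = 0 then f 0
  else if k = m + 2 then f 1
  else ((m : ℝ) + 1) * ∫ t in (0:ℝ)..1, bp m (k - 1) t * f t

lemma genCoeff_zero (m : ℕ) (f : ℝ → ℝ) : genCoeff m f 0 = f 0 := if_pos rfl

lemma genCoeff_last (m : ℕ) (f : ℝ → ℝ) : genCoeff m f (m + 2) = f 1 := by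
  simp [genCoeff]

lemma genCoeff_succ_of_le {m k : ℕ} (hk : k ≤ m) (f : ℝ → ℝ) :
    genCoeff m f (k + 1) = ((m : ℝ) + 1) * ∫ t in (0:ℝ)..1, bp m k t * f t := by
  rw [genCoeff, if_neg k.succ_ne_zero, if_neg (by omega), Nat.add_sub_cancel]

lemma Gen_eq_sum_genCoeff (m : ℕ) (f : ℝ → ℝ) (x : ℝ) :
    Gen (m + 2) f x = ∑ k ∈ Finset.range (m + 3), bp (m + 2) k x * genCoeff m f k := by
  have hm : ((m + 2 : ℕ) : ℝ) - 1 = (m : ℝ) + 1 := by push_cast; ring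
  have hmid : ∑ k ∈ Finset.range (m + 1), bp (m + 2) (k + 1) x * genCoeff m f (k + 1)
      = ((m : ℝ) + 1) * ∑ k ∈ Finset.range (m + 1),
          bp (m + 2) (k + 1) x * ∫ t in (0:ℝ)..1, bp m k t * f t := by
    rw [Finset.mul_sum]
    refine Finset.sum_congr rfl fun k hk => ?_
    rw [genCoeff_succ_of_le (Finset.mem_range_succ_iff.1 hk), mul_left_comm]
  rw [Finset.sum_range_succ, Finset.sum_range_succ', genCoeff_zero, genCoeff_last, bp_zero_index,
    bp_self_index, hmid, Gen, hm, ← Finset.Ico_add_one_right_eq_Icc, Finset.sum_Ico_eq_sum_range]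
  simp only [add_comm 1, Nat.add_sub_cancel, show m + 2 - 1 = m + 1 from rfl,
    show m + 2 - 2 = m from rfl]
  ring

lemma intervalIntegrable_bp_mul (m k : ℕ) {g : ℝ → ℝ} (hg : ContinuousOn g (Icc 0 1)) :
    IntervalIntegrable (fun t => bp m k t * g t) volume 0 1 :=
  ((continuous_bp m k).continuousOn.mul hg).intervalIntegrable_of_Icc zero_le_one

lemma genCoeff_succ_sub {m k : ℕ} (hk : k ≤ m + 1) {f f' : ℝ → ℝ}
    (hf : ∀ t ∈ Icc (0:ℝ) 1, HasDerivWithinAt f (f' t) (Icc 0 1) t)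
    (hf' : ContinuousOn f' (Icc 0 1)) :
    genCoeff m f (k + 1) - genCoeff m f k = ∫ t in (0:ℝ)..1, bp (m + 1) k t * f' t := by
  have hfc : ContinuousOn f (Icc 0 1) := fun t ht => (hf t ht).continuousWithinAt
  rcases k with _ | i
  · rw [integral_mul_deriv_eq_deriv_mul_Icc (hasDerivAt_bp_zero m)
      (continuous_const.mul (continuous_bp m 0)) hf hf', genCoeff_succ_of_le m.zero_le,
      genCoeff_zero, bp_at_one, bp_at_zero, if_neg m.succ_ne_zero.symm, if_pos rfl]
    simp only [mul_assoc, intervalIntegral.integral_const_mul]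
    ring
  · rw [integral_mul_deriv_eq_deriv_mul_Icc (hasDerivAt_bp_succ m i)
      (continuous_const.mul ((continuous_bp m i).sub (continuous_bp m (i + 1)))) hf hf',
      genCoeff_succ_of_le (Nat.le_of_succ_le_succ hk), bp_at_zero, if_neg i.succ_ne_zero]
    simp only [mul_assoc, sub_mul, intervalIntegral.integral_const_mul]
    rw [integral_sub (intervalIntegrable_bp_mul m i hfc) (intervalIntegrable_bp_mul m (i + 1) hfc)]
    rcases eq_or_ne i m with rfl | hi
    · rw [genCoeff_last, bp_at_one, if_pos rfl]
      simp only [bp_eq_zero_of_lt (Nat.lt_succ_self i), zero_mul, intervalIntegral.integral_zero]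
      ring
    · rw [genCoeff_succ_of_le (by omega), bp_at_one, if_neg (by omega)]
      ring

lemma genCoeff_const (m : ℕ) (c : ℝ) {k : ℕ} (hk : k ≤ m + 2) :
    genCoeff m (fun _ => c) k = c := by
  induction k with
  | zero => simp [genCoeff]
  | succ k ih =>
    have hstep := genCoeff_succ_sub (m := m) (k := k) (by omega) (f := fun _ => c)
      (f' := fun _ => 0) (fun _ _ => hasDerivWithinAt_const _ _ c) continuousOn_const
    simp only [mul_zero, intervalIntegral.integral_zero] at hstep
    linarith [ih (by omega)]

lemma integral_bp {m j : ℕ} (hj : j ≤ m) : ∫ t in (0:ℝ)..1, bp m j t = 1 / ((m : ℝ) + 1) := by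
  have h := genCoeff_const m 1 (k := j + 1) (by omega)
  simp only [genCoeff_succ_of_le hj, mul_one] at h
  field_simp
  linarith

lemma abs_le_supNorm {g : ℝ → ℝ} (hg : ContinuousOn g (Icc 0 1)) {t : ℝ}
    (ht : t ∈ Icc (0:ℝ) 1) : |g t| ≤ supNorm g := by
  refine le_csSup ?_ ⟨t, ht, rfl⟩
  obtain ⟨M, hM⟩ := isCompact_Icc.exists_bound_of_continuousOn hg
  exact ⟨M, by rintro _ ⟨s, hs, rfl⟩; simpa using hM s hs⟩

lemma abs_integral_bp_mul_le {m j : ℕ} (hj : j ≤ m) {g : ℝ → ℝ}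
    (hg : ContinuousOn g (Icc 0 1)) :
    |∫ t in (0:ℝ)..1, bp m j t * g t| ≤ supNorm g / ((m : ℝ) + 1) := by
  calc |∫ t in (0:ℝ)..1, bp m j t * g t|
      ≤ ∫ t in (0:ℝ)..1, bp m j t * supNorm g := by
        rw [← Real.norm_eq_abs]
        refine intervalIntegral.norm_integral_le_of_norm_le zero_le_one
          (Eventually.of_forall fun t ht => ?_)
          (((continuous_bp m j).mul continuous_const).intervalIntegrable (μ := volume) 0 1)
        have ht' : t ∈ Icc (0:ℝ) 1 := Ioc_subset_Icc_self ht
        rw [Real.norm_eq_abs, abs_mul, abs_of_nonneg (bp_nonneg m j ht')]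
        exact mul_le_mul_of_nonneg_left (abs_le_supNorm hg ht') (bp_nonneg m j ht')
    _ = supNorm g / ((m : ℝ) + 1) := by
        rw [intervalIntegral.integral_mul_const, integral_bp hj]; ring

lemma abs_sum_bp_mul_le (N : ℕ) {x : ℝ} (hx : x ∈ Icc (0:ℝ) 1) {a : ℕ → ℝ} {M : ℝ}
    (ha : ∀ k ≤ N, |a k| ≤ M) : |∑ k ∈ Finset.range (N + 1), bp N k x * a k| ≤ M := by
  calc |∑ k ∈ Finset.range (N + 1), bp N k x * a k|
      ≤ ∑ k ∈ Finset.range (N + 1), bp N k x * M := by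
        refine (Finset.abs_sum_le_sum_abs _ _).trans (Finset.sum_le_sum fun k hk => ?_)
        rw [abs_mul, abs_of_nonneg (bp_nonneg N k hx)]
        exact mul_le_mul_of_nonneg_left (ha k (Finset.mem_range_succ_iff.1 hk)) (bp_nonneg N k hx)
    _ = M := by rw [← Finset.sum_mul, sum_bp, one_mul]

/-- bound on the derivative of the genuine Bernstein–Durrmeyer
operator `U_n f`. -/
theorem stmt18 (n : ℕ) (hn : 2 ≤ n) (f f' : ℝ → ℝ)
    (hf : ∀ t ∈ Icc (0:ℝ) 1, HasDerivWithinAt f (f' t) (Icc 0 1) t)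
    (hf' : ContinuousOn f' (Icc 0 1)) (x : ℝ) (hx : x ∈ Icc (0:ℝ) 1) :
    |deriv (fun y => Gen n f y) x| ≤ supNorm f' := by
  obtain ⟨m, rfl⟩ : ∃ m, n = m + 2 := ⟨n - 2, by omega⟩
  set N : ℕ := m + 1
  have hderiv : HasDerivAt (fun y => Gen (m + 2) f y)
      (((N : ℝ) + 1) *
        ∑ k ∈ Finset.range (N + 1), bp N k x * ∫ t in (0:ℝ)..1, bp N k t * f' t) x := by
    simp_rw [Gen_eq_sum_genCoeff]
    refine (hasDerivAt_sum_bp_mul N (genCoeff m f) x).congr_deriv ?_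
    refine congrArg _ (Finset.sum_congr rfl fun k hk => ?_)
    rw [genCoeff_succ_sub (Finset.mem_range_succ_iff.1 hk) hf hf']
  rw [hderiv.deriv, abs_mul, abs_of_pos (by positivity)]
  calc ((N : ℝ) + 1) *
        |∑ k ∈ Finset.range (N + 1), bp N k x * ∫ t in (0:ℝ)..1, bp N k t * f' t|
      ≤ ((N : ℝ) + 1) * (supNorm f' / ((N : ℝ) + 1)) :=
        mul_le_mul_of_nonneg_left
          (abs_sum_bp_mul_le N hx fun k hk => abs_integral_bp_mul_le hk hf') (by positivity)
    _ = supNorm f' := by field_simp
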